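/- Let d, g_a, g_b be natural numbers with g_b ≤ g_a ≤ d. Then ∑_{s=0}^{g_b} C(d, 2s + g_a - g_b) * C(2s + g_a - g_b, s + g_a - g_b) * C(d - 2s - g_a + g_b, g_b - s) = C(d, g_a) * C(d, g_b), where any binomial C(n,k) with k > n is zero. -/

import Mathlib

/-!
Choosing a grade-`(2s + g_a - g_b)` blade, then its `(s + g_a - g_b)`-part, then `g_b - s` further
directions, is the same as choosing three disjoint sets of sizes `s + g_a - g_b`, `s`, `g_b - s`;
regrouping them as (a `g_a`-set split into `g_b - s` and `s + g_a - g_b`) plus an `s`-set outside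
it turns the summand into `C(d, g_a) · C(g_a, g_b - s) · C(d - g_a, s)`, and Vandermonde's
identity sums the last two factors to `C(d, g_b)`.
-/

open Finset

namespace Nat

theorem choose_add_mul_choose (n a b : ℕ) :
    n.choose (a + b) * (a + b).choose a = n.choose a * (n - a).choose b := by
  rw [choose_mul (le_add_right a b), Nat.add_sub_cancel_left]

theorem choose_mul_choose_sub_comm (n a b : ℕ) :
    n.choose a * (n - a).choose b = n.choose b * (n - b).choose a := by
  rw [← choose_add_mul_choose, ← choose_add_mul_choose, add_comm b a, choose_symm_add]

theorem choose_add_mul_choose_mul_choose_rotate (n k m s : ℕ) :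
    n.choose (m + s) * (m + s).choose m * (n - (m + s)).choose k =
      n.choose (k + m) * ((k + m).choose k * (n - (k + m)).choose s) := by
  calc n.choose (m + s) * (m + s).choose m * (n - (m + s)).choose k
      = n.choose m * ((n - m).choose s * (n - m - s).choose k) := by
        rw [choose_add_mul_choose, Nat.sub_add_eq, mul_assoc]
    _ = n.choose m * (n - m).choose k * (n - m - k).choose s := by
        rw [choose_mul_choose_sub_comm (n - m), mul_assoc]
    _ = n.choose (k + m) * ((k + m).choose k * (n - (k + m)).choose s) := by
        rw [choose_mul_choose_sub_comm n m, ← choose_add_mul_choose, Nat.sub_sub, add_comm m k,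
          mul_assoc]

theorem sum_range_choose_sub_mul_choose (a b k : ℕ) :
    ∑ s ∈ range (k + 1), a.choose (k - s) * b.choose s = (a + b).choose k := by
  rw [add_comm a, add_choose_eq, Finset.Nat.sum_antidiagonal_eq_sum_range_succ_mk]
  exact sum_congr rfl fun s _ => mul_comm _ _

end Nat

theorem stmt7 (d ga gb : ℕ) (h1 : gb ≤ ga) (h2 : ga ≤ d) :
    (∑ s ∈ Finset.range (gb + 1),
        d.choose (2 * s + ga - gb) * (2 * s + ga - gb).choose (s + ga - gb) *
          (d - (2 * s + ga - gb)).choose (gb - s))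
      = d.choose ga * d.choose gb := by
  have summand (s : ℕ) (hs : s ∈ range (gb + 1)) :
      d.choose (2 * s + ga - gb) * (2 * s + ga - gb).choose (s + ga - gb) *
          (d - (2 * s + ga - gb)).choose (gb - s) =
        d.choose ga * (ga.choose (gb - s) * (d - ga).choose s) := by
    have hs : s ≤ gb := mem_range_succ_iff.mp hs
    have hlower : 2 * s + ga - gb = (s + ga - gb) + s := by omega
    have hupper : ga = (gb - s) + (s + ga - gb) := by omega
    rw [hlower, Nat.choose_add_mul_choose_mul_choose_rotate, ← hupper]
  rw [sum_congr rfl summand, ← mul_sum, Nat.sum_range_choose_sub_mul_choose,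
    Nat.add_sub_cancel' h2]
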